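/- For odd d, the function f_d(x,y) = ((x + sqrt(x^2+4y))/2)^d + ((x - sqrt(x^2+4y))/2)^d + y^d is a polynomial in x and y, and satisfies f_d(x,y) = 1 whenever x + y = 1. -/

import Mathlib

/-!
Writing `u, v = (x ± √(x² + 4y)) / 2`, we have `u + v = x` and `-u v = y`, so `u ^ n + v ^ n`
is the Lucas-type sequence `P₀ = 2`, `P₁ = x`, `Pₙ₊₂ = x Pₙ₊₁ + y Pₙ`, a polynomial in `x, y`.
On the line `x + y = 1` the pair `1, x - 1` has the same sum and negated product, so the
expression equals `1 + (x - 1) ^ d + (1 - x) ^ d`, which is `1` for odd `d`.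
-/

open MvPolynomial

noncomputable def powerSumPoly {R : Type*} [CommRing R] : ℕ → MvPolynomial (Fin 2) R
  | 0 => 2
  | 1 => X 0
  | n + 2 => X 0 * powerSumPoly (n + 1) + X 1 * powerSumPoly n

theorem eval_powerSumPoly {R : Type*} [CommRing R] (u v : R) :
    ∀ n, eval ![u + v, -(u * v)] (powerSumPoly n) = u ^ n + v ^ n
  | 0 => by norm_num [powerSumPoly]
  | 1 => by simp [powerSumPoly]
  | n + 2 => by
    simp only [powerSumPoly, map_add, map_mul, eval_X, Matrix.cons_val_zero,
      Matrix.cons_val_one, eval_powerSumPoly u v n, eval_powerSumPoly u v (n + 1)]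
    ring

theorem eval_powerSumPoly_of_discrim_nonneg {x y : ℝ} (h : 0 ≤ x ^ 2 + 4 * y) (n : ℕ) :
    eval ![x, y] (powerSumPoly n) =
      ((x + √(x ^ 2 + 4 * y)) / 2) ^ n + ((x - √(x ^ 2 + 4 * y)) / 2) ^ n := by
  have hs := Real.sq_sqrt h
  set s := √(x ^ 2 + 4 * y)
  have hxy : ![x, y] = ![(x + s) / 2 + (x - s) / 2, -((x + s) / 2 * ((x - s) / 2))] := by
    congr 2
    · ring
    · linear_combination (-1 / 4 : ℝ) * hs
  rw [hxy, eval_powerSumPoly]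

theorem stmt_1 (d : ℕ) (hd : Odd d) :
    (∃ p : MvPolynomial (Fin 2) ℝ, ∀ x y : ℝ, 0 ≤ x ^ 2 + 4 * y →
      MvPolynomial.eval ![x, y] p =
        ((x + Real.sqrt (x ^ 2 + 4 * y)) / 2) ^ d
          + ((x - Real.sqrt (x ^ 2 + 4 * y)) / 2) ^ d + y ^ d) ∧
    (∀ x y : ℝ, x + y = 1 →
      ((x + Real.sqrt (x ^ 2 + 4 * y)) / 2) ^ d
        + ((x - Real.sqrt (x ^ 2 + 4 * y)) / 2) ^ d + y ^ d = 1) := by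
  have hp : ∀ x y : ℝ, 0 ≤ x ^ 2 + 4 * y →
      eval ![x, y] (powerSumPoly d + X 1 ^ d) =
        ((x + √(x ^ 2 + 4 * y)) / 2) ^ d + ((x - √(x ^ 2 + 4 * y)) / 2) ^ d + y ^ d := by
    intro x y h
    simp [eval_powerSumPoly_of_discrim_nonneg h]
  refine ⟨⟨_, hp⟩, fun x y hxy => ?_⟩
  obtain rfl : y = -(1 * (x - 1)) := by linarith
  rw [← hp x _ (by nlinarith [sq_nonneg (x - 2)])]
  have hP := eval_powerSumPoly 1 (x - 1) d
  rw [add_sub_cancel] at hP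
  simp only [map_add, map_pow, eval_X, Matrix.cons_val_one, Matrix.cons_val_zero, hP, one_pow]
  rw [neg_pow, hd.neg_one_pow, one_mul]
  ring
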